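/- arXiv:2102.07121 — 3 statements merged into one kernel-verified Lean document; each statement's English description precedes it below -/
import Mathlib

section
/- Let A ⊆ ℝ^n be a nonempty compact set, let F : ℝ^p × ℝ^n → ℝ^m be jointly continuous, and let f : ℝ^p × ℝ^n → ℝ be jointly continuous. Assume that for every α ∈ A the problem min_{ω ∈ ℝ^p} f(ω, α) has a unique global minimizer ω*(α), and that the set {ω*(α) : α ∈ A} is bounded. Then the vector-valued function α ↦ F(ω*(α), α) is continuous on A. -/
/-!
Along any approach `α' → α` within `A`, the minimizers `ω*(α')` stay in the compact closure of
`ω*(A)`, and every cluster point `ω₀` of them satisfies `f(ω₀, α) ≤ f(ω, α)` for all `ω`, since the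
inequality `f(ω*(α'), α') ≤ f(ω, α')` passes to the limit by continuity of `f`. Uniqueness of the
minimizer forces `ω₀ = ω*(α)`, and a map into a compact set with a single cluster point converges.
-/

open Filter Topology

noncomputable section

/-- The set of minimal points of a set `C ⊆ ℝ^m` w.r.t. the componentwise order
(the partial order induced by the cone `P = ℝ^m₊`). -/
def minPts {m : ℕ} (C : Set (EuclideanSpace ℝ (Fin m))) : Set (EuclideanSpace ℝ (Fin m)) :=
  {l ∈ C | ¬ ∃ l' ∈ C, l' ≠ l ∧ ∀ i, l' i ≤ l i}

/-- The set of minimal points of the image `g(Z)`. -/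
def minOf {n m : ℕ} (Z : Set (EuclideanSpace ℝ (Fin n)))
    (g : EuclideanSpace ℝ (Fin n) → EuclideanSpace ℝ (Fin m)) :
    Set (EuclideanSpace ℝ (Fin m)) :=
  minPts (g '' Z)

/-- The efficient (Pareto-optimal) solution set of `g` on `Z`. -/
def effOf {n m : ℕ} (Z : Set (EuclideanSpace ℝ (Fin n)))
    (g : EuclideanSpace ℝ (Fin n) → EuclideanSpace ℝ (Fin m)) :
    Set (EuclideanSpace ℝ (Fin n)) :=
  {z ∈ Z | g z ∈ minOf Z g}

/-- The weakly efficient solution set: `z* ∈ Z` such that there is no `z ∈ Z` with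
`gᵢ(z) < gᵢ(z*)` for every `i`. -/
def wEffOf {n m : ℕ} (Z : Set (EuclideanSpace ℝ (Fin n)))
    (g : EuclideanSpace ℝ (Fin n) → EuclideanSpace ℝ (Fin m)) :
    Set (EuclideanSpace ℝ (Fin n)) :=
  {z ∈ Z | ¬ ∃ z' ∈ Z, ∀ i, g z' i < g z i}

/-- The set of weakly minimal points of the image `g(Z)`. -/
def wMinOf {n m : ℕ} (Z : Set (EuclideanSpace ℝ (Fin n)))
    (g : EuclideanSpace ℝ (Fin n) → EuclideanSpace ℝ (Fin m)) :
    Set (EuclideanSpace ℝ (Fin m)) :=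
  g '' wEffOf Z g

/-- `g : Z → ℝ^m` is P-convex iff each component is convex on `Z`. -/
def PConvexOn {n m : ℕ} (Z : Set (EuclideanSpace ℝ (Fin n)))
    (g : EuclideanSpace ℝ (Fin n) → EuclideanSpace ℝ (Fin m)) : Prop :=
  ∀ i, ConvexOn ℝ Z (fun z => g z i)

/-- `g : Z → ℝ^m` is strictly P-convex iff every component satisfies the strict
convexity inequality for distinct points and λ ∈ (0,1). -/
def StrictPConvexOn {n m : ℕ} (Z : Set (EuclideanSpace ℝ (Fin n)))
    (g : EuclideanSpace ℝ (Fin n) → EuclideanSpace ℝ (Fin m)) : Prop :=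
  ∀ z₁ ∈ Z, ∀ z₂ ∈ Z, z₁ ≠ z₂ → ∀ lam : ℝ, 0 < lam → lam < 1 → ∀ i,
    g (lam • z₁ + (1 - lam) • z₂) i < lam * g z₁ i + (1 - lam) * g z₂ i

/-- The recession cone `0⁺(A) = {d : a + t • d ∈ A, ∀ a ∈ A, ∀ t ≥ 0}`. -/
def recCone {n : ℕ} (A : Set (EuclideanSpace ℝ (Fin n))) : Set (EuclideanSpace ℝ (Fin n)) :=
  {d | ∀ a ∈ A, ∀ t : ℝ, 0 ≤ t → a + t • d ∈ A}

/-- The Kuratowski lower limit of a sequence of sets. -/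
def KLi {X : Type*} [TopologicalSpace X] (A : ℕ → Set X) : Set X :=
  {a | ∃ s : ℕ → X, (∀ᶠ k in atTop, s k ∈ A k) ∧ Tendsto s atTop (𝓝 a)}

/-- The Kuratowski upper limit of a sequence of sets. -/
def KLs {X : Type*} [TopologicalSpace X] (A : ℕ → Set X) : Set X :=
  {a | ∃ φ : ℕ → ℕ, StrictMono φ ∧ ∃ s : ℕ → X,
    (∀ k, s k ∈ A (φ k)) ∧ Tendsto s atTop (𝓝 a)}

/-- The sequence of functions `g` converges continuously on `Z` to `g0`. -/
def ContConvOn {X Y : Type*} [TopologicalSpace X] [TopologicalSpace Y]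
    (Z : Set X) (g : ℕ → X → Y) (g0 : X → Y) : Prop :=
  ∀ z ∈ Z, ∀ s : ℕ → X, (∀ k, s k ∈ Z) → Tendsto s atTop (𝓝 z) →
    Tendsto (fun k => g k (s k)) atTop (𝓝 (g0 z))

section ArgminContinuity

variable {ι X Y β : Type*} [TopologicalSpace X] [TopologicalSpace Y] [TopologicalSpace β]

theorem MapClusterPt.prodMk_of_tendsto {l : Filter ι} {u : ι → Y} {v : ι → X} {y : Y} {x : X}
    (hu : MapClusterPt y l u) (hv : Tendsto v l (𝓝 x)) :
    MapClusterPt (y, x) l fun i => (u i, v i) := by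
  rw [mapClusterPt_iff_frequently]
  intro s hs
  obtain ⟨U, hU, V, hV, hUV⟩ := mem_nhds_prod_iff.1 hs
  exact ((hu.frequently hU).and_eventually (hv hV)).mono fun i hi => hUV ⟨hi.1, hi.2⟩

variable [PartialOrder β] [OrderClosedTopology β]

theorem le_of_mapClusterPt_of_eventually_le {f : Y × X → β} (hf : Continuous f)
    {l : Filter X} {x : X} (hl : l ≤ 𝓝 x) {ω : X → Y}
    (hmin : ∀ᶠ x' in l, ∀ y, f (ω x', x') ≤ f (y, x')) {y₀ : Y} (hy₀ : MapClusterPt y₀ l ω)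
    (y : Y) : f (y₀, x) ≤ f (y, x) := by
  have hclosed : IsClosed {q : Y × X | f q ≤ f (y, q.2)} :=
    isClosed_le hf (hf.comp (continuous_const.prodMk continuous_snd))
  exact hclosed.mem_of_mapClusterPt (hy₀.prodMk_of_tendsto (tendsto_id.mono_left hl))
    (hmin.mono fun x' hx' => hx' y)

theorem continuousOn_of_unique_isMin_of_mapsTo_isCompact {f : Y × X → β} (hf : Continuous f)
    {A : Set X} {K : Set Y} (hK : IsCompact K) {ω : X → Y} (hωK : Set.MapsTo ω A K)
    (hmin : ∀ x ∈ A, ∀ y, f (ω x, x) ≤ f (y, x))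
    (huniq : ∀ x ∈ A, ∀ y, f (y, x) = f (ω x, x) → y = ω x) :
    ContinuousOn ω A := by
  intro x hx
  refine hK.tendsto_nhds_of_unique_mapClusterPt
    (eventually_nhdsWithin_of_forall fun x' hx' => hωK hx') fun y₀ _ hy₀ => ?_
  have hy₀_min : f (y₀, x) ≤ f (ω x, x) :=
    le_of_mapClusterPt_of_eventually_le hf nhdsWithin_le_nhds
      (eventually_nhdsWithin_of_forall hmin) hy₀ (ω x)
  exact huniq x hx y₀ (le_antisymm hy₀_min (hmin x hx y₀))

end ArgminContinuity

theorem stmt_0_general {n p m : ℕ}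
    (A : Set (EuclideanSpace ℝ (Fin n)))
    (F : EuclideanSpace ℝ (Fin p) × EuclideanSpace ℝ (Fin n) → EuclideanSpace ℝ (Fin m))
    (hF : Continuous F)
    (f : EuclideanSpace ℝ (Fin p) × EuclideanSpace ℝ (Fin n) → ℝ)
    (hf : Continuous f)
    (ωstar : EuclideanSpace ℝ (Fin n) → EuclideanSpace ℝ (Fin p))
    (hmin : ∀ α ∈ A, ∀ ω, f (ωstar α, α) ≤ f (ω, α))
    (huniq : ∀ α ∈ A, ∀ ω, f (ω, α) = f (ωstar α, α) → ω = ωstar α)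
    (hbdd : Bornology.IsBounded (ωstar '' A)) :
    ContinuousOn (fun α => F (ωstar α, α)) A := by
  have hK : IsCompact (closure (ωstar '' A)) :=
    Metric.isCompact_of_isClosed_isBounded isClosed_closure hbdd.closure
  have hωstar : ContinuousOn ωstar A :=
    continuousOn_of_unique_isMin_of_mapsTo_isCompact hf hK
      (fun α hα => subset_closure (Set.mem_image_of_mem ωstar hα)) hmin huniq
  exact hF.comp_continuousOn (hωstar.prodMk continuousOn_id)

/-- If `A ⊆ ℝ^n` is nonempty and compact, `F : ℝ^p × ℝ^n → ℝ^m` and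
`f : ℝ^p × ℝ^n → ℝ` are jointly continuous, for every `α ∈ A` the function `f(·, α)`
has a unique global minimizer `ωstar α`, and `{ωstar α : α ∈ A}` is bounded, then
`α ↦ F(ωstar α, α)` is continuous on `A`. -/
theorem stmt_0 {n p m : ℕ}
    (A : Set (EuclideanSpace ℝ (Fin n))) (hAne : A.Nonempty) (hAcp : IsCompact A)
    (F : EuclideanSpace ℝ (Fin p) × EuclideanSpace ℝ (Fin n) → EuclideanSpace ℝ (Fin m))
    (hF : Continuous F)
    (f : EuclideanSpace ℝ (Fin p) × EuclideanSpace ℝ (Fin n) → ℝ)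
    (hf : Continuous f)
    (ωstar : EuclideanSpace ℝ (Fin n) → EuclideanSpace ℝ (Fin p))
    (hmin : ∀ α ∈ A, ∀ ω, f (ωstar α, α) ≤ f (ω, α))
    (huniq : ∀ α ∈ A, ∀ ω, f (ω, α) = f (ωstar α, α) → ω = ωstar α)
    (hbdd : Bornology.IsBounded (ωstar '' A)) :
    ContinuousOn (fun α => F (ωstar α, α)) A :=
  stmt_0_general A F hF f hf ωstar hmin huniq hbdd
end
end

section
/- Let A ⊆ ℝ^n be a nonempty set and let φ_K : A → ℝ^m (K ∈ ℕ) converge continuously to φ : A → ℝ^m. If Ls Min φ_K ⊆ Min φ, then Ls Eff φ_K ⊆ Eff φ: whenever (K_k) is a strictly increasing sequence of indices, α_k ∈ Eff φ_{K_k} for all k, and α_k → ᾱ ∈ A, one has ᾱ ∈ Eff φ. -/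
open Filter Topology

noncomputable section

/-- If `φ_K → φ` continuously on a nonempty `A` and `Ls Min φ_K ⊆ Min φ`,
then `Ls Eff φ_K ⊆ Eff φ`. -/
theorem stmt_11 {n m : ℕ}
    (A : Set (EuclideanSpace ℝ (Fin n))) (hAne : A.Nonempty)
    (φK : ℕ → EuclideanSpace ℝ (Fin n) → EuclideanSpace ℝ (Fin m))
    (φ : EuclideanSpace ℝ (Fin n) → EuclideanSpace ℝ (Fin m))
    (hcc : ContConvOn A φK φ)
    (hMin : KLs (fun K => minOf A (φK K)) ⊆ minOf A φ) :
    ∀ (Kk : ℕ → ℕ), StrictMono Kk →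
      ∀ (αk : ℕ → EuclideanSpace ℝ (Fin n)), (∀ k, αk k ∈ effOf A (φK (Kk k))) →
      ∀ abar ∈ A, Tendsto αk atTop (𝓝 abar) → abar ∈ effOf A φ := by
  intro Kk hKk αk hαk abar habar htend
  classical
  -- extend the subsequence to a full sequence
  set s : ℕ → EuclideanSpace ℝ (Fin n) :=
    fun j => if h : ∃ k, Kk k = j then αk h.choose else abar with hs
  have hsA : ∀ j, s j ∈ A := by
    intro j
    simp only [hs]
    split
    · exact (hαk _).1
    · exact habar
  have hsval : ∀ k, s (Kk k) = αk k := by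
    intro k
    have h : ∃ k', Kk k' = Kk k := ⟨k, rfl⟩
    have := h.choose_spec
    have hk : h.choose = k := hKk.injective this
    simp only [hs, dif_pos h, hk]
  have hstend : Tendsto s atTop (𝓝 abar) := by
    rw [tendsto_def]
    intro U hU
    have h1 := htend hU
    rw [mem_map, mem_atTop_sets] at h1
    rw [mem_atTop_sets]
    obtain ⟨N, hN⟩ := h1
    refine ⟨Kk N, fun j hj => ?_⟩
    simp only [Set.mem_preimage, hs]
    split
    · next h =>
      apply hN
      have : Kk N ≤ Kk h.choose := by rw [h.choose_spec]; exact hj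
      exact (hKk.le_iff_le).mp this
    · exact mem_of_mem_nhds hU
  have hφ : Tendsto (fun j => φK j (s j)) atTop (𝓝 (φ abar)) :=
    hcc abar habar s hsA hstend
  have hsub : Tendsto (fun k => φK (Kk k) (αk k)) atTop (𝓝 (φ abar)) := by
    have := hφ.comp hKk.tendsto_atTop
    refine this.congr fun k => ?_
    simp [Function.comp, hsval k]
  have hmem : φ abar ∈ KLs (fun K => minOf A (φK K)) :=
    ⟨Kk, hKk, fun k => φK (Kk k) (αk k), fun k => (hαk k).2, hsub⟩
  exact ⟨habar, hMin hmem⟩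
end
end

section
/- Let A ⊆ ℝ^n be a nonempty compact convex set, let φ_K : A → ℝ^m (K ∈ ℕ) converge continuously to φ : A → ℝ^m, and let φ be strictly P-convex. If Min φ ⊆ Li Min φ_K, then Eff φ ⊆ Li Eff φ_K: every ᾱ ∈ Eff φ is the limit of a sequence (α_K) with α_K ∈ Eff φ_K for all sufficiently large K. -/
open Filter Topology

noncomputable section

/-!
By strict convexity, an efficient point `abar` of `φ` is the only point of `A` at which `φ`
takes the value `φ abar`: otherwise the midpoint of two such points would dominate `φ abar`
strictly in every component. Lift a sequence `l_K ∈ Min φ_K` with `l_K → φ abar` to points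
`α_K ∈ Eff φ_K` with `φ_K(α_K) = l_K`. By continuous convergence, every cluster point `a'` of
`(α_K)` in the compact set `A` satisfies `φ a' = lim l_K = φ abar`, so `a' = abar`, and hence
`α_K → abar`.
-/

section ContConvOn

variable {X Y : Type*} [TopologicalSpace X] [TopologicalSpace Y] {Z : Set X}
  {g : ℕ → X → Y} {g0 : X → Y}

theorem ContConvOn.tendsto_comp_strictMono (hcc : ContConvOn Z g g0) {z : X} (hz : z ∈ Z)
    {s : ℕ → X} (hs : ∀ k, s k ∈ Z) {σ : ℕ → ℕ} (hσ : StrictMono σ)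
    (hlim : Tendsto (s ∘ σ) atTop (𝓝 z)) :
    Tendsto (fun k => g (σ k) (s (σ k))) atTop (𝓝 (g0 z)) := by
  classical
  -- Extend `s ∘ σ` to a full sequence converging to `z`, to which `hcc` applies.
  set t : ℕ → X := fun j => if j ∈ Set.range σ then s j else z
  have ht_mem : ∀ j, t j ∈ Z := fun j => by dsimp only [t]; split_ifs <;> simp [hs, hz]
  have ht_σ : ∀ k, t (σ k) = s (σ k) := fun k => if_pos ⟨k, rfl⟩
  have ht_lim : Tendsto t atTop (𝓝 z) := by
    refine tendsto_nhds.2 fun U hU hzU => ?_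
    obtain ⟨K₀, hK₀⟩ := eventually_atTop.1 (tendsto_nhds.1 hlim U hU hzU)
    refine eventually_atTop.2 ⟨σ K₀, fun j hj => ?_⟩
    by_cases hj' : j ∈ Set.range σ
    · obtain ⟨k, rfl⟩ := hj'
      simpa [ht_σ] using hK₀ k (hσ.le_iff_le.1 hj)
    · rwa [show t j = z from if_neg hj']
  refine ((hcc z hz t ht_mem ht_lim).comp hσ.tendsto_atTop).congr fun k => ?_
  rw [Function.comp_apply, ht_σ]

theorem ContConvOn.tendsto_of_tendsto_apply [FirstCountableTopology X] [T2Space Y]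
    (hcc : ContConvOn Z g g0) (hZ : IsCompact Z) {α : ℕ → X} (hα : ∀ k, α k ∈ Z)
    {l : ℕ → Y} (hαl : ∀ᶠ k in atTop, g k (α k) = l k) {z : X}
    (hl : Tendsto l atTop (𝓝 (g0 z))) (hinj : ∀ a ∈ Z, g0 a = g0 z → a = z) :
    Tendsto α atTop (𝓝 z) := by
  refine hZ.tendsto_nhds_of_unique_mapClusterPt (Eventually.of_forall hα) fun a ha hclust => ?_
  obtain ⟨σ, hσ, hσlim⟩ := hclust.tendsto_subseq
  have hσ_top := hσ.tendsto_atTop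
  have hlim_a : Tendsto (fun k => l (σ k)) atTop (𝓝 (g0 a)) :=
    (hcc.tendsto_comp_strictMono ha hα hσ hσlim).congr' (hσ_top.eventually hαl)
  exact hinj a ha (tendsto_nhds_unique hlim_a (hl.comp hσ_top))

end ContConvOn

variable {n m : ℕ} {A : Set (EuclideanSpace ℝ (Fin n))}
  {g : EuclideanSpace ℝ (Fin n) → EuclideanSpace ℝ (Fin m)}

theorem effOf_eq_self_of_eq_zero (hm : m = 0) : effOf A g = A := by
  subst hm
  refine Set.Subset.antisymm (fun _ h => h.1) fun a ha => ⟨ha, ⟨a, ha, rfl⟩, ?_⟩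
  rintro ⟨l', -, hne, -⟩
  exact hne (Subsingleton.elim _ _)

theorem exists_mem_effOf_of_mem_minOf {l : EuclideanSpace ℝ (Fin m)} (hl : l ∈ minOf A g) :
    ∃ a ∈ effOf A g, g a = l := by
  obtain ⟨a, ha, rfl⟩ := hl.1
  exact ⟨a, ⟨ha, hl⟩, rfl⟩

theorem StrictPConvexOn.eq_of_mem_effOf (hsc : StrictPConvexOn A g) (hA : Convex ℝ A)
    (hm : 0 < m) {abar a : EuclideanSpace ℝ (Fin n)} (habar : abar ∈ effOf A g) (ha : a ∈ A)
    (heq : g a = g abar) : a = abar := by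
  by_contra hne
  set mid := (1 / 2 : ℝ) • a + (1 - 1 / 2 : ℝ) • abar
  have hmid : mid ∈ A := hA ha habar.1 (by norm_num) (by norm_num) (by norm_num)
  have hlt : ∀ i, g mid i < g abar i := fun i => by
    have := hsc a ha abar habar.1 hne (1 / 2) (by norm_num) (by norm_num) i
    rw [heq] at this
    change g mid i < _ at this
    linarith
  exact habar.2.2 ⟨g mid, ⟨mid, hmid, rfl⟩,
    fun h => (hlt ⟨0, hm⟩).ne (congrArg (· ⟨0, hm⟩) h), fun i => (hlt i).le⟩

theorem stmt_12_general {n m : ℕ}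
    (A : Set (EuclideanSpace ℝ (Fin n)))
    (hAcp : IsCompact A) (hAcv : Convex ℝ A)
    (φK : ℕ → EuclideanSpace ℝ (Fin n) → EuclideanSpace ℝ (Fin m))
    (φ : EuclideanSpace ℝ (Fin n) → EuclideanSpace ℝ (Fin m))
    (hcc : ContConvOn A φK φ)
    (hsc : StrictPConvexOn A φ)
    (hMin : minOf A φ ⊆ KLi (fun K => minOf A (φK K))) :
    ∀ abar ∈ effOf A φ, ∃ αs : ℕ → EuclideanSpace ℝ (Fin n),
      (∀ᶠ K in atTop, αs K ∈ effOf A (φK K)) ∧ Tendsto αs atTop (𝓝 abar) := by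
  intro abar habar
  rcases Nat.eq_zero_or_pos m with hm | hm
  · refine ⟨fun _ => abar, Eventually.of_forall fun K => ?_, tendsto_const_nhds⟩
    rw [effOf_eq_self_of_eq_zero hm]
    exact habar.1
  obtain ⟨l, hl_min, hl_lim⟩ := hMin habar.2
  have hlift : ∀ K, ∃ a ∈ A, l K ∈ minOf A (φK K) → a ∈ effOf A (φK K) ∧ φK K a = l K := by
    intro K
    by_cases hK : l K ∈ minOf A (φK K)
    · obtain ⟨a, ha, hal⟩ := exists_mem_effOf_of_mem_minOf hK
      exact ⟨a, ha.1, fun _ => ⟨ha, hal⟩⟩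
    · exact ⟨abar, habar.1, fun h => absurd h hK⟩
  choose αs hαs_mem hαs_eff using hlift
  refine ⟨αs, hl_min.mono fun K hK => (hαs_eff K hK).1, ?_⟩
  exact hcc.tendsto_of_tendsto_apply hAcp hαs_mem (hl_min.mono fun K hK => (hαs_eff K hK).2)
    hl_lim fun a ha heq => hsc.eq_of_mem_effOf hAcv hm habar ha heq

/-- If `φ_K → φ` continuously on a nonempty compact convex `A`, `φ` is
strictly P-convex, and `Min φ ⊆ Li Min φ_K`, then `Eff φ ⊆ Li Eff φ_K`. -/
theorem stmt_12 {n m : ℕ}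
    (A : Set (EuclideanSpace ℝ (Fin n))) (hAne : A.Nonempty)
    (hAcp : IsCompact A) (hAcv : Convex ℝ A)
    (φK : ℕ → EuclideanSpace ℝ (Fin n) → EuclideanSpace ℝ (Fin m))
    (φ : EuclideanSpace ℝ (Fin n) → EuclideanSpace ℝ (Fin m))
    (hcc : ContConvOn A φK φ)
    (hsc : StrictPConvexOn A φ)
    (hMin : minOf A φ ⊆ KLi (fun K => minOf A (φK K))) :
    ∀ abar ∈ effOf A φ, ∃ αs : ℕ → EuclideanSpace ℝ (Fin n),
      (∀ᶠ K in atTop, αs K ∈ effOf A (φK K)) ∧ Tendsto αs atTop (𝓝 abar) :=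
  stmt_12_general A hAcp hAcv φK φ hcc hsc hMin
end
end
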